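/- arXiv:2007.01283 — 3 statements merged into one kernel-verified Lean document; each statement's English description precedes it below -/
import Mathlib

section
/- For any measurable μ with E[μ(X,Z)²] < ∞ and E[Y²] < ∞, the floodgate numerator satisfies E[Cov(μ*(X,Z), μ(X,Z) | Z)] = E[Y · (μ(X,Z) - E[μ(X,Z) | Z])], where μ*(x,z) = E[Y|X=x,Z=z]. -/
/-!
Conditional expectation onto `m` is self-adjoint against `m`-measurable `L²` factors:
`∫ μ[f|m] * h = ∫ f * h`, by pulling `h` inside and integrating out. Applied over `σ(Z)` this
turns each term of the conditional covariance into an unconditional moment of `μ*`, and applied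
over `σ(X, Z)` (where both `μ(X,Z)` and `E[μ(X,Z)|Z]` are measurable) it replaces `μ*` by `Y`.
-/

open MeasureTheory ProbabilityTheory

theorem integral_condExp_mul_eq_integral_mul {Ω : Type*} {m m0 : MeasurableSpace Ω}
    {μ : Measure Ω} [IsFiniteMeasure μ] (hm : m ≤ m0) {f h : Ω → ℝ}
    (hf : MemLp f 2 μ) (hh : MemLp h 2 μ) (hhm : StronglyMeasurable[m] h) :
    ∫ ω, (μ[f|m]) ω * h ω ∂μ = ∫ ω, f ω * h ω ∂μ := by
  have pull_out : μ[f * h|m] =ᵐ[μ] μ[f|m] * h :=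
    condExp_mul_of_stronglyMeasurable_right hhm (hf.integrable_mul hh) (hf.integrable one_le_two)
  calc ∫ ω, (μ[f|m]) ω * h ω ∂μ = ∫ ω, (μ[f * h|m]) ω ∂μ := integral_congr_ae pull_out.symm
    _ = ∫ ω, f ω * h ω ∂μ := integral_condExp hm

/- `mXZ` and `mZ` stand for `σ(X, Z)` and `σ(Z)`, `g` for `μ(X, Z)`, and `P[Y|mXZ]` for
`μ*(X, Z)`. -/
/-- The floodgate numerator identity:
`E[Cov(μ*, μ | Z)] = E[Y (μ(X,Z) - E[μ(X,Z)|Z])]` where `μ* = E[Y|X,Z]` and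
`g` plays the role of `μ(X,Z)`. -/
theorem stmt4
    {Ω : Type*} [m0 : MeasurableSpace Ω] (P : Measure Ω) [IsProbabilityMeasure P]
    (mZ mXZ : MeasurableSpace Ω) (hZ : mZ ≤ mXZ) (hXZ : mXZ ≤ m0)
    (Y : Ω → ℝ) (hY : MemLp Y 2 P)
    (g : Ω → ℝ) (hg : MemLp g 2 P) (hgm : StronglyMeasurable[mXZ] g) :
    ∫ ω, ((P[(P[Y|mXZ]) * g|mZ]) ω - (P[P[Y|mXZ]|mZ]) ω * (P[g|mZ]) ω) ∂P
      = ∫ ω, Y ω * (g ω - (P[g|mZ]) ω) ∂P := by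
  have hmZ : mZ ≤ m0 := hZ.trans hXZ
  have hμstar : MemLp (P[Y|mXZ]) 2 P := hY.condExp one_le_two
  have hgZ : MemLp (P[g|mZ]) 2 P := hg.condExp one_le_two
  have hgZm : StronglyMeasurable[mXZ] (P[g|mZ]) := stronglyMeasurable_condExp.mono hZ
  have h_mean_product : ∫ ω, (P[(P[Y|mXZ]) * g|mZ]) ω ∂P = ∫ ω, Y ω * g ω ∂P := by
    rw [integral_condExp hmZ]
    exact integral_condExp_mul_eq_integral_mul hXZ hY hg hgm
  have h_product_means :
      ∫ ω, (P[P[Y|mXZ]|mZ]) ω * (P[g|mZ]) ω ∂P = ∫ ω, Y ω * (P[g|mZ]) ω ∂P := by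
    rw [integral_condExp_mul_eq_integral_mul hmZ hμstar hgZ stronglyMeasurable_condExp]
    exact integral_condExp_mul_eq_integral_mul hXZ hY hgZ hgZm
  have hprodZ : Integrable (fun ω => (P[P[Y|mXZ]|mZ]) ω * (P[g|mZ]) ω) P :=
    (hμstar.condExp one_le_two).integrable_mul hgZ
  have hYg : Integrable (fun ω => Y ω * g ω) P := hY.integrable_mul hg
  have hYgZ : Integrable (fun ω => Y ω * (P[g|mZ]) ω) P := hY.integrable_mul hgZ
  simp only [mul_sub]
  rw [integral_sub integrable_condExp hprodZ, integral_sub hYg hYgZ, h_mean_product,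
    h_product_means]
end

section
/- The χ² divergence between two multivariate Gaussian distributions P = N(a₁, Σ₁) and Q = N(a₂, Σ₂) on ℝ^d, whenever 2Σ₂ - Σ₁ is positive definite, equals |Σ₂| / (|Σ₁|^{1/2} |2Σ₂ - Σ₁|^{1/2}) · exp{(a₁-a₂)ᵀ (2Σ₂ - Σ₁)^{-1} (a₁-a₂)} - 1. -/
open MeasureTheory Matrix Real

/-- Density of the multivariate Gaussian `N(a, S)` on `ℝ^d` (w.r.t. Lebesgue measure). -/
noncomputable def gaussDensity (d : ℕ) (a : Fin d → ℝ) (S : Matrix (Fin d) (Fin d) ℝ)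
    (x : Fin d → ℝ) : ℝ :=
  (2 * Real.pi) ^ (-(d : ℝ) / 2) * S.det ^ (-(1 : ℝ) / 2) *
    Real.exp (-(1 / 2) * ((x - a) ⬝ᵥ S⁻¹.mulVec (x - a)))

/-!
The exponent of `p₁² / p₂` is `-((x - a₁)ᵀ Σ₁⁻¹ (x - a₁) - (x - a₂)ᵀ (2Σ₂)⁻¹ (x - a₂))`.
Completing the square turns it into `-(x - m)ᵀ D (x - m) + (a₁ - a₂)ᵀ (2Σ₂ - Σ₁)⁻¹ (a₁ - a₂)`
with `D = Σ₁⁻¹ - (2Σ₂)⁻¹`, which is positive definite because inversion reverses the Loewner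
order and `Σ₁ < 2Σ₂`. The remaining Gaussian integral is `√π ^ d / √(det D)`, and
`det D = det (2Σ₂ - Σ₁) / (det Σ₁ · 2 ^ d det Σ₂)`.
-/

section Gaussian

variable {ι : Type*} [Fintype ι]

theorem integral_exp_neg_dotProduct_self :
    ∫ x : ι → ℝ, exp (-(x ⬝ᵥ x)) = √π ^ Fintype.card ι := by
  have h : ∀ x : ι → ℝ, exp (-(x ⬝ᵥ x)) = ∏ i, exp (-1 * x i ^ 2) := fun x => by
    simp only [dotProduct, ← Real.exp_sum, ← Finset.sum_neg_distrib, neg_one_mul, sq]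
  simp_rw [h]
  rw [integral_fintype_prod_volume_eq_pow (fun t => exp (-1 * t ^ 2)), integral_gaussian, div_one]

variable [DecidableEq ι]

theorem integral_comp_mulVec {E : Type*} [NormedAddCommGroup E] [NormedSpace ℝ E]
    {R : Matrix ι ι ℝ} (hR : R.det ≠ 0) (g : (ι → ℝ) → E) :
    ∫ x, g (R *ᵥ x) = |R.det|⁻¹ • ∫ y, g y := by
  let e : (ι → ℝ) ≃L[ℝ] (ι → ℝ) :=
    (Matrix.toLinearEquiv' R (invertibleOfIsUnitDet R hR.isUnit)).toContinuousLinearEquiv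
  have hmap : Measure.map e.toHomeomorph volume = ENNReal.ofReal |R.det⁻¹| • volume :=
    Real.map_matrix_volume_pi_eq_smul_volume_pi hR
  have := e.toHomeomorph.measurableEmbedding.integral_map (μ := volume) g
  rw [hmap, integral_smul_measure, ENNReal.toReal_ofReal (abs_nonneg _), abs_inv] at this
  exact this.symm

open scoped MatrixOrder in
theorem Matrix.PosDef.exists_isUnit_eq_transpose_mul_self {P : Matrix ι ι ℝ} (hP : P.PosDef) :
    ∃ R : Matrix ι ι ℝ, IsUnit R ∧ P = Rᵀ * R := by
  obtain ⟨R, hR, rfl⟩ :=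
    CStarAlgebra.isStrictlyPositive_iff_eq_star_mul_self.mp hP.isStrictlyPositive
  exact ⟨R, hR, rfl⟩

theorem integral_exp_neg_dotProduct_mulVec {P : Matrix ι ι ℝ} (hP : P.PosDef) :
    ∫ x, exp (-(x ⬝ᵥ P *ᵥ x)) = √π ^ Fintype.card ι / √P.det := by
  obtain ⟨R, hR, rfl⟩ := hP.exists_isUnit_eq_transpose_mul_self
  have hdet : R.det ≠ 0 := ((isUnit_iff_isUnit_det R).mp hR).ne_zero
  have hquad : ∀ x, x ⬝ᵥ (Rᵀ * R) *ᵥ x = R *ᵥ x ⬝ᵥ R *ᵥ x := fun x => by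
    rw [← mulVec_mulVec, dotProduct_mulVec, vecMul_transpose]
  simp_rw [hquad]
  rw [integral_comp_mulVec hdet (fun y => exp (-(y ⬝ᵥ y))), integral_exp_neg_dotProduct_self,
    det_mul, det_transpose, ← sq, Real.sqrt_sq_eq_abs, smul_eq_mul, inv_mul_eq_div]

end Gaussian

section QuadraticForms

variable {ι α : Type*} [Fintype ι] [CommRing α]

theorem Matrix.IsSymm.dotProduct_mulVec_comm {M : Matrix ι ι α} (hM : M.IsSymm) (x y : ι → α) :
    x ⬝ᵥ M *ᵥ y = y ⬝ᵥ M *ᵥ x := by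
  rw [dotProduct_mulVec, ← mulVec_transpose, hM.eq, dotProduct_comm]

theorem Matrix.IsSymm.add_dotProduct_mulVec_add {M : Matrix ι ι α} (hM : M.IsSymm)
    (x y : ι → α) :
    (x + y) ⬝ᵥ M *ᵥ (x + y) = x ⬝ᵥ M *ᵥ x + 2 * (x ⬝ᵥ M *ᵥ y) + y ⬝ᵥ M *ᵥ y := by
  rw [mulVec_add, add_dotProduct, dotProduct_add, dotProduct_add, hM.dotProduct_mulVec_comm y x]
  ring

theorem Matrix.IsSymm.sub_dotProduct_mulVec_sub {M : Matrix ι ι α} (hM : M.IsSymm)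
    (x y : ι → α) :
    (x - y) ⬝ᵥ M *ᵥ (x - y) = x ⬝ᵥ M *ᵥ x - 2 * (x ⬝ᵥ M *ᵥ y) + y ⬝ᵥ M *ᵥ y := by
  rw [mulVec_sub, sub_dotProduct, dotProduct_sub, dotProduct_sub, hM.dotProduct_mulVec_comm y x]
  ring

variable [DecidableEq ι]

theorem Matrix.dotProduct_inv_mulVec_sub_dotProduct_inv_mulVec {A B : Matrix ι ι α}
    (hA : A.IsSymm) (hB : B.IsSymm) (hAu : IsUnit A.det) (hBu : IsUnit B.det)
    (hCu : IsUnit (B - A).det) (a₁ a₂ x : ι → α) :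
    (x - a₁) ⬝ᵥ A⁻¹ *ᵥ (x - a₁) - (x - a₂) ⬝ᵥ B⁻¹ *ᵥ (x - a₂)
      = (x - (a₁ + A *ᵥ (B - A)⁻¹ *ᵥ (a₁ - a₂))) ⬝ᵥ (A⁻¹ - B⁻¹) *ᵥ
          (x - (a₁ + A *ᵥ (B - A)⁻¹ *ᵥ (a₁ - a₂)))
        - (a₁ - a₂) ⬝ᵥ (B - A)⁻¹ *ᵥ (a₁ - a₂) := by
  set C := B - A
  set y := x - a₁
  set w := a₁ - a₂
  set u := A *ᵥ C⁻¹ *ᵥ w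
  have hDu : (A⁻¹ - B⁻¹) *ᵥ u = B⁻¹ *ᵥ w := by
    have : (A⁻¹ - B⁻¹) * A * C⁻¹ = B⁻¹ := by
      calc (A⁻¹ - B⁻¹) * A * C⁻¹ = B⁻¹ * (B - A) * C⁻¹ := by
            rw [Matrix.sub_mul, Matrix.mul_sub, nonsing_inv_mul _ hAu, nonsing_inv_mul _ hBu]
        _ = B⁻¹ := by rw [Matrix.mul_assoc, mul_nonsing_inv _ hCu, Matrix.mul_one]
    rw [mulVec_mulVec, mulVec_mulVec, this]
  have hcross : u ⬝ᵥ B⁻¹ *ᵥ w + w ⬝ᵥ B⁻¹ *ᵥ w = w ⬝ᵥ C⁻¹ *ᵥ w := by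
    have huw : u + w = B *ᵥ C⁻¹ *ᵥ w := by
      rw [show B = A + C by simp [C], add_mulVec, mulVec_mulVec _ C, mul_nonsing_inv _ hCu,
        one_mulVec]
    rw [← add_dotProduct, huw, ← vecMul_transpose B, hB.eq, ← dotProduct_mulVec, mulVec_mulVec,
      mul_nonsing_inv _ hBu, one_mulVec, dotProduct_comm]
  have hy : x - (a₁ + u) = y - u := sub_add_eq_sub_sub x a₁ u
  have hy' : x - a₂ = y + w := (sub_add_sub_cancel x a₁ a₂).symm
  rw [hy, hy', (hA.inv.sub hB.inv).sub_dotProduct_mulVec_sub, hB.inv.add_dotProduct_mulVec_add,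
    hDu, sub_mulVec, dotProduct_sub]
  linear_combination -hcross

end QuadraticForms

section InverseDifference

variable {ι : Type*} [Fintype ι] [DecidableEq ι]

theorem Matrix.det_inv_sub_inv {K : Type*} [Field K] {A B : Matrix ι ι K}
    (h : IsUnit A ↔ IsUnit B) : (A⁻¹ - B⁻¹).det = (B - A).det / (A.det * B.det) := by
  rw [Matrix.inv_sub_inv h, det_mul, det_mul, det_nonsing_inv, det_nonsing_inv,
    Ring.inverse_eq_inv']
  ring

open scoped ComplexOrder in
theorem Matrix.PosDef.inv_sub_inv {𝕜 : Type*} [RCLike 𝕜] {A B : Matrix ι ι 𝕜} (hA : A.PosDef)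
    (hBA : (B - A).PosDef) : (A⁻¹ - B⁻¹).PosDef := by
  have hB : B.PosDef := by simpa using hA.add hBA
  have hX : (Aᴴ * (B - A)⁻¹ * A + A).PosDef :=
    (hBA.inv.conjTranspose_mul_mul_same (mulVec_injective_iff_isUnit.mpr hA.isUnit)).add hA
  rw [hA.isHermitian.eq] at hX
  -- `(A⁻¹ - B⁻¹)⁻¹ = A (B - A)⁻¹ A + A`, a positive definite matrix
  have hinv : (A * (B - A)⁻¹ * A + A) * (A⁻¹ - B⁻¹) = 1 := by
    rw [Matrix.inv_sub_inv (by simp [hA.isUnit, hB.isUnit])]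
    have hAu := (isUnit_iff_isUnit_det A).mp hA.isUnit
    have hBu := (isUnit_iff_isUnit_det B).mp hB.isUnit
    have hCu := (isUnit_iff_isUnit_det _).mp hBA.isUnit
    calc _ = A * (B - A)⁻¹ * (A * A⁻¹) * (B - A) * B⁻¹ + A * A⁻¹ * (B - A) * B⁻¹ := by
          simp only [Matrix.add_mul, Matrix.mul_assoc]
      _ = (A + (B - A)) * B⁻¹ := by
          rw [mul_nonsing_inv A hAu, Matrix.mul_one, Matrix.mul_assoc A, nonsing_inv_mul _ hCu,
            Matrix.mul_one, Matrix.one_mul, Matrix.add_mul]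
      _ = 1 := by rw [add_sub_cancel, mul_nonsing_inv B hBu]
  rw [← inv_eq_right_inv hinv]
  exact hX.inv

end InverseDifference

theorem gaussDensity_eq {d : ℕ} (a : Fin d → ℝ) {S : Matrix (Fin d) (Fin d) ℝ} (hS : 0 ≤ S.det)
    (x : Fin d → ℝ) :
    gaussDensity d a S x
      = (√((2 * π) ^ d * S.det))⁻¹ * exp (-(1 / 2) * ((x - a) ⬝ᵥ S⁻¹ *ᵥ (x - a))) := by
  rw [gaussDensity, sqrt_eq_rpow, ← rpow_neg (by positivity), mul_rpow (by positivity) hS,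
    ← rpow_natCast_mul (by positivity)]
  congr 3 <;> ring

theorem gaussDensity_sq_div_gaussDensity {d : ℕ} (a₁ a₂ : Fin d → ℝ)
    {S₁ S₂ : Matrix (Fin d) (Fin d) ℝ} (h₁ : 0 < S₁.det) (h₂ : 0 < S₂.det) (x : Fin d → ℝ) :
    gaussDensity d a₁ S₁ x ^ 2 / gaussDensity d a₂ S₂ x
      = √((2 * π) ^ d * S₂.det) / ((2 * π) ^ d * S₁.det) *
          exp (-((x - a₁) ⬝ᵥ S₁⁻¹ *ᵥ (x - a₁) - (x - a₂) ⬝ᵥ ((2 : ℝ) • S₂)⁻¹ *ᵥ (x - a₂))) := by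
  have hinv : ((2 : ℝ) • S₂)⁻¹ = (2 : ℝ)⁻¹ • S₂⁻¹ := by
    rw [inv_smul _ _ h₂.ne'.isUnit, invOf_eq_inv]
  have hexp : -((x - a₁) ⬝ᵥ S₁⁻¹ *ᵥ (x - a₁) - (x - a₂) ⬝ᵥ ((2 : ℝ) • S₂)⁻¹ *ᵥ (x - a₂))
      = -(1 / 2) * ((x - a₁) ⬝ᵥ S₁⁻¹ *ᵥ (x - a₁)) + -(1 / 2) * ((x - a₁) ⬝ᵥ S₁⁻¹ *ᵥ (x - a₁))
        - -(1 / 2) * ((x - a₂) ⬝ᵥ S₂⁻¹ *ᵥ (x - a₂)) := by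
    rw [hinv, smul_mulVec, dotProduct_smul, smul_eq_mul]
    ring
  have hX₁ : 0 < (2 * π) ^ d * S₁.det := by positivity
  rw [gaussDensity_eq a₁ h₁.le, gaussDensity_eq a₂ h₂.le, hexp, exp_sub, exp_add]
  field_simp
  rw [sq_sqrt hX₁.le]

theorem integral_gaussDensity_sq_div_gaussDensity {d : ℕ} (a₁ a₂ : Fin d → ℝ)
    {S₁ S₂ : Matrix (Fin d) (Fin d) ℝ} (h₁ : S₁.PosDef) (h₂ : S₂.PosDef)
    (h₃ : ((2 : ℝ) • S₂ - S₁).PosDef) :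
    ∫ x, gaussDensity d a₁ S₁ x ^ 2 / gaussDensity d a₂ S₂ x
      = √((2 * π) ^ d * S₂.det) / ((2 * π) ^ d * S₁.det) *
          (√π ^ d / √(S₁⁻¹ - ((2 : ℝ) • S₂)⁻¹).det) *
          exp ((a₁ - a₂) ⬝ᵥ ((2 : ℝ) • S₂ - S₁)⁻¹ *ᵥ (a₁ - a₂)) := by
  have hB : ((2 : ℝ) • S₂).PosDef := h₂.smul two_pos
  set D := S₁⁻¹ - ((2 : ℝ) • S₂)⁻¹
  set m := a₁ + S₁ *ᵥ ((2 : ℝ) • S₂ - S₁)⁻¹ *ᵥ (a₁ - a₂)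
  have hpt : ∀ x, gaussDensity d a₁ S₁ x ^ 2 / gaussDensity d a₂ S₂ x
      = √((2 * π) ^ d * S₂.det) / ((2 * π) ^ d * S₁.det) *
          exp ((a₁ - a₂) ⬝ᵥ ((2 : ℝ) • S₂ - S₁)⁻¹ *ᵥ (a₁ - a₂)) *
          exp (-((x - m) ⬝ᵥ D *ᵥ (x - m))) := fun x => by
    rw [gaussDensity_sq_div_gaussDensity a₁ a₂ h₁.det_pos h₂.det_pos,
      dotProduct_inv_mulVec_sub_dotProduct_inv_mulVec (isHermitian_iff_isSymm.mp h₁.isHermitian)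
        (isHermitian_iff_isSymm.mp hB.isHermitian) h₁.det_pos.ne'.isUnit hB.det_pos.ne'.isUnit
        h₃.det_pos.ne'.isUnit, neg_sub, sub_eq_neg_add, exp_add, mul_assoc, mul_comm (exp _)]
  simp_rw [hpt]
  rw [integral_const_mul, integral_sub_right_eq_self (fun y => exp (-(y ⬝ᵥ D *ᵥ y))) m,
    integral_exp_neg_dotProduct_mulVec (h₁.inv_sub_inv h₃), Fintype.card_fin,
    mul_right_comm]

/-- χ²-divergence between two multivariate Gaussians:
`χ²(N(a₁,Σ₁) ‖ N(a₂,Σ₂)) = ∫ p²/q - 1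
  = |Σ₂| / (|Σ₁|^{1/2} |2Σ₂-Σ₁|^{1/2}) · exp((a₁-a₂)ᵀ(2Σ₂-Σ₁)⁻¹(a₁-a₂)) - 1`
whenever `2Σ₂ - Σ₁` is positive definite. -/
theorem stmt10 {d : ℕ} (a₁ a₂ : Fin d → ℝ) (S₁ S₂ : Matrix (Fin d) (Fin d) ℝ)
    (h1 : S₁.PosDef) (h2 : S₂.PosDef) (h3 : ((2 : ℝ) • S₂ - S₁).PosDef) :
    (∫ x : Fin d → ℝ, (gaussDensity d a₁ S₁ x)^2 / gaussDensity d a₂ S₂ x) - 1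
      = S₂.det / (Real.sqrt S₁.det * Real.sqrt ((2 : ℝ) • S₂ - S₁).det) *
          Real.exp ((a₁ - a₂) ⬝ᵥ ((2 : ℝ) • S₂ - S₁)⁻¹.mulVec (a₁ - a₂)) - 1 := by
  have hB : ((2 : ℝ) • S₂).PosDef := h2.smul two_pos
  rw [integral_gaussDensity_sq_div_gaussDensity a₁ a₂ h1 h2 h3,
    det_inv_sub_inv (by simp [h1.isUnit, hB.isUnit]), det_smul, Fintype.card_fin]
  congr 2
  have hs₁ := h1.det_pos
  have hs₂ := h2.det_pos
  have hc := h3.det_pos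
  have hπ : (√π ^ d) ^ 2 = π ^ d := by rw [← pow_mul, mul_comm, pow_mul, sq_sqrt pi_pos.le]
  rw [← pow_left_inj₀ (by positivity) (by positivity) two_ne_zero, mul_pow, div_pow, div_pow,
    div_pow, sq_sqrt (by positivity), sq_sqrt (by positivity), hπ, mul_pow √S₁.det,
    sq_sqrt hs₁.le, sq_sqrt hc.le]
  field_simp
  ring
end

section
/- Let W = (W₁, W₂) where W₁ ~ N(0,1), W₂ = W₁² + ε₁ with ε₁ ~ N(0,1) independent of W₁, and Y = W₁² + ε₂ with ε₂ ~ N(0,1) independent of (W₁, ε₁). Then the best linear projection coefficients (E[WᵀW])^{-1} E[WᵀY] equal (0, 3/4): the coefficient on the non-null variable W₁ is zero while the coefficient on the null variable W₂ (which satisfies W₂ ⊥ Y | W₁) is 3/4. -/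
/-!
Independence reduces every entry to moments of a single standard Gaussian:
`E[W₁W₂] = E[W₁Y] = E[W₁³] = 0`, `E[W₂²] = E[W₁⁴] + E[ε₁²] = 4` and `E[W₂Y] = E[W₁⁴] = 3`.
Odd Gaussian moments vanish by the symmetry `x ↦ -x`, and the even ones are half-integer values
of `Γ`, giving `E[W₁²] = 1` and `E[W₁⁴] = 3`. The second-moment matrix is thus `diag(1, 4)`,
and the coefficients are `(0 / 1, 3 / 4)`.
-/

open MeasureTheory ProbabilityTheory Matrix Real
open scoped NNReal Nat

lemma inv_of_diag_fin_two_mulVec {K : Type*} [Field K] {a d : K} (ha : a ≠ 0) (hd : d ≠ 0)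
    (b c : K) : (of ![![a, 0], ![0, d]])⁻¹ *ᵥ ![b, c] = ![a⁻¹ * b, d⁻¹ * c] := by
  have hdiag : of ![![a, 0], ![0, d]] = diagonal ![a, d] := by
    ext i j; fin_cases i <;> fin_cases j <;> rfl
  have hinv : (diagonal ![a, d])⁻¹ = diagonal ![a⁻¹, d⁻¹] := by
    refine inv_eq_right_inv ?_
    rw [diagonal_mul_diagonal, ← diagonal_one]
    congr 1; ext i; fin_cases i <;> simp [ha, hd]
  rw [hdiag, hinv]
  ext i; fin_cases i <;> simp [mulVec_diagonal]

namespace ProbabilityTheory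

lemma integrable_pow_gaussianReal (μ : ℝ) (v : ℝ≥0) (n : ℕ) :
    Integrable (fun x : ℝ => x ^ n) (gaussianReal μ v) :=
  ((memLp_id_gaussianReal n).integrable_norm_pow').mono' (by fun_prop)
    (.of_forall fun x => by simp [norm_pow])

lemma integral_pow_gaussianReal_of_odd (v : ℝ≥0) {n : ℕ} (hn : Odd n) :
    ∫ x, x ^ n ∂gaussianReal 0 v = 0 := by
  have h : ∫ x, x ^ n ∂gaussianReal 0 v = ∫ x, (-x) ^ n ∂gaussianReal 0 v := by
    conv_lhs => rw [← neg_zero, ← gaussianReal_map_neg]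
    exact integral_map (by fun_prop) (by fun_prop)
  simp only [hn.neg_pow, integral_neg] at h
  linarith

lemma integral_Ioi_pow_even_mul_exp_neg_half_sq (k : ℕ) :
    ∫ x in Set.Ioi (0 : ℝ), x ^ (2 * k) * rexp (-(1 / 2) * x ^ 2)
      = 2 ^ k * √2 * (1 / 2) * Gamma (k + 1 / 2) := by
  have h := integral_rpow_mul_exp_neg_mul_rpow (p := 2) (q := (2 * k : ℕ)) (b := 1 / 2)
    two_pos (neg_one_lt_zero.trans_le (Nat.cast_nonneg _)) (by norm_num)
  simp only [rpow_natCast, rpow_two] at h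
  rw [h]
  congr 2
  · rw [one_div, inv_rpow zero_le_two, ← rpow_neg zero_le_two, neg_div, neg_neg,
      show ((2 * k : ℕ) + 1 : ℝ) / 2 = k + 1 / 2 by push_cast; ring,
      rpow_add two_pos, rpow_natCast, sqrt_eq_rpow]
  · push_cast; ring

lemma integral_pow_two_mul_gaussianReal (k : ℕ) :
    ∫ x, x ^ (2 * k) ∂gaussianReal 0 1 = (2 * k - 1 : ℕ)‼ := by
  have hpdf (x : ℝ) : gaussianPDFReal 0 1 x * x ^ (2 * k)
      = (fun t => (√(2 * π))⁻¹ * (t ^ (2 * k) * rexp (-(1 / 2) * t ^ 2))) |x| := by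
    simp only [gaussianPDFReal, NNReal.coe_one, sub_zero, mul_one, pow_mul, sq_abs]
    ring_nf
  rw [integral_gaussianReal_eq_integral_smul one_ne_zero]
  -- the integrand is even, so `integral_comp_abs` halves it to an integral over `(0, ∞)`
  simp only [smul_eq_mul, hpdf]
  rw [integral_comp_abs (f := fun t => (√(2 * π))⁻¹ * (t ^ (2 * k) * rexp (-(1 / 2) * t ^ 2))),
    integral_const_mul, integral_Ioi_pow_even_mul_exp_neg_half_sq,
    Gamma_nat_add_half, sqrt_mul zero_le_two]
  field_simp

variable {Ω : Type*} [MeasurableSpace Ω] {P : Measure Ω} {X : Ω → ℝ} {μ : Measure ℝ}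

lemma HasLaw.integral_pow (hX : HasLaw X μ P) (n : ℕ) :
    ∫ ω, X ω ^ n ∂P = ∫ x, x ^ n ∂μ :=
  hX.integral_comp (f := fun x => x ^ n) (by fun_prop)

lemma HasLaw.integrable_pow_of_gaussianReal {m : ℝ} {v : ℝ≥0} (hX : HasLaw X (gaussianReal m v) P)
    (n : ℕ) : Integrable (fun ω => X ω ^ n) P := by
  have h := integrable_pow_gaussianReal m v n
  rw [← hX.map_eq] at h
  exact h.comp_aemeasurable hX.aemeasurable

lemma HasLaw.integrable_of_gaussianReal {m : ℝ} {v : ℝ≥0} (hX : HasLaw X (gaussianReal m v) P) :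
    Integrable X P := by
  simpa using hX.integrable_pow_of_gaussianReal 1

lemma HasLaw.integral_eq_zero_of_gaussianReal {v : ℝ≥0} (hX : HasLaw X (gaussianReal 0 v) P) :
    ∫ ω, X ω ∂P = 0 := by
  rw [hX.integral_eq, integral_id_gaussianReal]

lemma HasLaw.integral_mul_self_of_gaussianReal (hX : HasLaw X (gaussianReal 0 1) P) :
    ∫ ω, X ω * X ω ∂P = 1 := by
  have h := integral_pow_two_mul_gaussianReal 1
  norm_num [Nat.doubleFactorial] at h
  simpa only [← sq, hX.integral_pow] using h

lemma integral_mul_add_eq_of_indepFun {U V a : Ω → ℝ} (hUa : U ⟂ᵢ[P] a)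
    (hU : Integrable U P) (hUV : Integrable (fun ω => U ω * V ω) P) (ha : Integrable a P)
    (ha0 : ∫ ω, a ω ∂P = 0) :
    ∫ ω, U ω * (V ω + a ω) ∂P = ∫ ω, U ω * V ω ∂P := by
  have hUa' : Integrable (fun ω => U ω * a ω) P := hUa.integrable_mul hU ha
  simp only [mul_add]
  rw [integral_add hUV hUa',
    hUa.integral_fun_mul_eq_mul_integral hU.1 ha.1, ha0, mul_zero, add_zero]

lemma integral_add_mul_add_eq_of_indepFun {S a b : Ω → ℝ} (hSa : S ⟂ᵢ[P] a) (hSb : S ⟂ᵢ[P] b)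
    (hS : Integrable S P) (hSS : Integrable (fun ω => S ω * S ω) P)
    (ha : Integrable a P) (hb : Integrable b P) (hab : Integrable (fun ω => a ω * b ω) P)
    (ha0 : ∫ ω, a ω ∂P = 0) (hb0 : ∫ ω, b ω ∂P = 0) :
    ∫ ω, (S ω + a ω) * (S ω + b ω) ∂P = ∫ ω, S ω * S ω ∂P + ∫ ω, a ω * b ω ∂P := by
  have hSb' : Integrable (fun ω => S ω * b ω) P := hSb.integrable_mul hS hb
  have haS : Integrable (fun ω => a ω * S ω) P := hSa.symm.integrable_mul ha hS
  simp only [add_mul, mul_add]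
  rw [integral_add (f := fun ω => S ω * S ω + a ω * S ω) (g := fun ω => S ω * b ω + a ω * b ω)
      (hSS.add haS) (hSb'.add hab), integral_add hSS haS, integral_add hSb' hab,
    hSb.integral_fun_mul_eq_mul_integral hS.1 hb.1,
    hSa.symm.integral_fun_mul_eq_mul_integral ha.1 hS.1, ha0, hb0]
  ring

lemma integral_mul_sq_add_of_indepFun {e : Ω → ℝ} {v : ℝ≥0} (hX : HasLaw X (gaussianReal 0 v) P)
    (hXe : X ⟂ᵢ[P] e) (he : Integrable e P) (he0 : ∫ ω, e ω ∂P = 0) :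
    ∫ ω, X ω * (X ω ^ 2 + e ω) ∂P = 0 := by
  have hcube (ω : Ω) : X ω * X ω ^ 2 = X ω ^ 3 := by ring
  rw [integral_mul_add_eq_of_indepFun hXe hX.integrable_of_gaussianReal
    (by simpa only [hcube] using hX.integrable_pow_of_gaussianReal 3) he he0]
  simp only [hcube]
  rw [hX.integral_pow, integral_pow_gaussianReal_of_odd v (by decide)]

lemma integral_sq_add_mul_sq_add_of_indepFun {a b : Ω → ℝ} (hX : HasLaw X (gaussianReal 0 1) P)
    (hXa : X ⟂ᵢ[P] a) (hXb : X ⟂ᵢ[P] b) (ha : Integrable a P) (hb : Integrable b P)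
    (hab : Integrable (fun ω => a ω * b ω) P) (ha0 : ∫ ω, a ω ∂P = 0) (hb0 : ∫ ω, b ω ∂P = 0) :
    ∫ ω, (X ω ^ 2 + a ω) * (X ω ^ 2 + b ω) ∂P = 3 + ∫ ω, a ω * b ω ∂P := by
  have hfourth (ω : Ω) : X ω ^ 2 * X ω ^ 2 = X ω ^ (2 * 2) := by ring
  have hXa2 : (fun ω => X ω ^ 2) ⟂ᵢ[P] a := hXa.comp (measurable_id.pow_const 2) measurable_id
  have hXb2 : (fun ω => X ω ^ 2) ⟂ᵢ[P] b := hXb.comp (measurable_id.pow_const 2) measurable_id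
  rw [integral_add_mul_add_eq_of_indepFun hXa2 hXb2 (hX.integrable_pow_of_gaussianReal 2)
    (by simpa only [hfourth] using hX.integrable_pow_of_gaussianReal (2 * 2)) ha hb hab ha0 hb0]
  simp only [hfourth]
  rw [hX.integral_pow, integral_pow_two_mul_gaussianReal]
  norm_num

end ProbabilityTheory

theorem stmt16_general {Ω : Type*} [MeasurableSpace Ω] (P : Measure Ω)
    (W1 e1 e2 : Ω → ℝ)
    (hW1 : Measurable W1) (he1 : Measurable e1) (he2 : Measurable e2)
    (hind : iIndepFun ![W1, e1, e2] P)
    (h1 : Measure.map W1 P = gaussianReal 0 1)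
    (h2 : Measure.map e1 P = gaussianReal 0 1)
    (h3 : Measure.map e2 P = gaussianReal 0 1) :
    let W2 : Ω → ℝ := fun ω => (W1 ω)^2 + e1 ω
    let Y : Ω → ℝ := fun ω => (W1 ω)^2 + e2 ω
    (Matrix.of ![![∫ ω, W1 ω * W1 ω ∂P, ∫ ω, W1 ω * W2 ω ∂P],
                 ![∫ ω, W2 ω * W1 ω ∂P, ∫ ω, W2 ω * W2 ω ∂P]])⁻¹.mulVec
        ![∫ ω, W1 ω * Y ω ∂P, ∫ ω, W2 ω * Y ω ∂P] = ![0, 3/4] := by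
  intro W2 Y
  have hW1law : HasLaw W1 (gaussianReal 0 1) P := ⟨hW1.aemeasurable, h1⟩
  have he1law : HasLaw e1 (gaussianReal 0 1) P := ⟨he1.aemeasurable, h2⟩
  have he2law : HasLaw e2 (gaussianReal 0 1) P := ⟨he2.aemeasurable, h3⟩
  have hW1e1 : W1 ⟂ᵢ[P] e1 := hind.indepFun (i := 0) (j := 1) (by decide)
  have hW1e2 : W1 ⟂ᵢ[P] e2 := hind.indepFun (i := 0) (j := 2) (by decide)
  have he1e2 : e1 ⟂ᵢ[P] e2 := hind.indepFun (i := 1) (j := 2) (by decide)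
  have he1int := he1law.integrable_of_gaussianReal
  have he2int := he2law.integrable_of_gaussianReal
  have he1mean := he1law.integral_eq_zero_of_gaussianReal
  have he2mean := he2law.integral_eq_zero_of_gaussianReal
  have hA12 : ∫ ω, W1 ω * W2 ω ∂P = 0 := integral_mul_sq_add_of_indepFun hW1law hW1e1 he1int he1mean
  have hA21 : ∫ ω, W2 ω * W1 ω ∂P = 0 := by simpa only [mul_comm] using hA12
  have hA22 : ∫ ω, W2 ω * W2 ω ∂P = 4 := by
    rw [integral_sq_add_mul_sq_add_of_indepFun hW1law hW1e1 hW1e1 he1int he1int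
      (by simpa only [sq] using he1law.integrable_pow_of_gaussianReal 2) he1mean he1mean,
      he1law.integral_mul_self_of_gaussianReal]
    norm_num
  have hB1 : ∫ ω, W1 ω * Y ω ∂P = 0 := integral_mul_sq_add_of_indepFun hW1law hW1e2 he2int he2mean
  have hB2 : ∫ ω, W2 ω * Y ω ∂P = 3 := by
    rw [integral_sq_add_mul_sq_add_of_indepFun hW1law hW1e1 hW1e2 he1int he2int
      (he1e2.integrable_mul he1int he2int) he1mean he2mean,
      he1e2.integral_fun_mul_eq_mul_integral he1int.1 he2int.1, he1mean, zero_mul, add_zero]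
  rw [hW1law.integral_mul_self_of_gaussianReal, hA12, hA21, hA22, hB1, hB2,
    inv_of_diag_fin_two_mulVec one_ne_zero four_ne_zero]
  norm_num

/-- Linear projection example: with `W₁, ε₁, ε₂` i.i.d. standard Gaussians,
`W₂ = W₁² + ε₁` and `Y = W₁² + ε₂`, the best linear projection coefficients
`(E[WᵀW])⁻¹ E[WᵀY]` equal `(0, 3/4)`. -/
theorem stmt16 {Ω : Type*} [MeasurableSpace Ω] (P : Measure Ω) [IsProbabilityMeasure P]
    (W1 e1 e2 : Ω → ℝ)
    (hW1 : Measurable W1) (he1 : Measurable e1) (he2 : Measurable e2)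
    (hind : iIndepFun ![W1, e1, e2] P)
    (h1 : Measure.map W1 P = gaussianReal 0 1)
    (h2 : Measure.map e1 P = gaussianReal 0 1)
    (h3 : Measure.map e2 P = gaussianReal 0 1) :
    let W2 : Ω → ℝ := fun ω => (W1 ω)^2 + e1 ω
    let Y : Ω → ℝ := fun ω => (W1 ω)^2 + e2 ω
    (Matrix.of ![![∫ ω, W1 ω * W1 ω ∂P, ∫ ω, W1 ω * W2 ω ∂P],
                 ![∫ ω, W2 ω * W1 ω ∂P, ∫ ω, W2 ω * W2 ω ∂P]])⁻¹.mulVec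
        ![∫ ω, W1 ω * Y ω ∂P, ∫ ω, W2 ω * Y ω ∂P] = ![0, 3/4] :=
  stmt16_general P W1 e1 e2 hW1 he1 he2 hind h1 h2 h3
end
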